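/- In any execution of the men-proposing deferred acceptance algorithm on a profile with n men and n women (complete strict preferences), there exists at least one woman who receives exactly one proposal in total. -/

import Mathlib

open scoped Classical

noncomputable section

/-- A two-sided matching market with `n` men and `n` women, each with a complete
strict preference order over the other side. `mpref m k` is man `m`'s `k`-th
favourite woman (0 = top), and `wpref w k` is woman `w`'s `k`-th favourite man. -/
structure Profile (n : ℕ) where
  mpref : Fin n → (Fin n ≃ Fin n)
  wpref : Fin n → (Fin n ≃ Fin n)

namespace Profile

variable {n : ℕ}

/-- rank (0 = best) of woman `w` in man `m`'s preference list -/
def mrank (P : Profile n) (m w : Fin n) : ℕ := ((P.mpref m).symm w : ℕ)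

/-- rank (0 = best) of man `m` in woman `w`'s preference list -/
def wrank (P : Profile n) (w m : Fin n) : ℕ := ((P.wpref w).symm m : ℕ)

/-- man `m` strictly prefers woman `w` to woman `w'` -/
def mPrefers (P : Profile n) (m w w' : Fin n) : Prop := P.mrank m w < P.mrank m w'

/-- woman `w` strictly prefers man `m` to man `m'` -/
def wPrefers (P : Profile n) (w m m' : Fin n) : Prop := P.wrank w m < P.wrank w m'

/-- top choice of man `m` -/
def topM (P : Profile n) (m : Fin n) : Fin n := P.mpref m ⟨0, m.pos⟩

/-- top choice of woman `w` -/
def topW (P : Profile n) (w : Fin n) : Fin n := P.wpref w ⟨0, w.pos⟩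

/-- the profile with the roles of men and women exchanged -/
def swap (P : Profile n) : Profile n := ⟨P.wpref, P.mpref⟩

/-- State of the men-proposing deferred acceptance algorithm:
`next m` = number of proposals man `m` has made so far,
`held w` = the man woman `w` currently tentatively holds (if any). -/
structure DAState (n : ℕ) where
  next : Fin n → ℕ
  held : Fin n → Option (Fin n)

def initState (n : ℕ) : DAState n := ⟨fun _ => 0, fun _ => none⟩

/-- the men currently unmatched (held by no woman) -/
def unmatched (s : DAState n) : Finset (Fin n) :=
  Finset.univ.filter fun m => ∀ w : Fin n, s.held w ≠ some m

/-- the woman man `m` proposes to next: his most preferred woman among those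
who have not rejected him yet -/
def target (P : Profile n) (s : DAState n) (m : Fin n) : Fin n :=
  P.mpref m ⟨s.next m % n, Nat.mod_lt _ m.pos⟩

/-- the men proposing to woman `w` in the current round -/
def proposers (P : Profile n) (s : DAState n) (w : Fin n) : Finset (Fin n) :=
  (unmatched s).filter fun m => target P s m = w

/-- one round of the men-proposing deferred acceptance algorithm: every
unmatched man proposes to his favourite woman who has not rejected him yet,
and every woman tentatively holds her favourite among her current partner
and the new proposers, rejecting the rest -/
def step (P : Profile n) (s : DAState n) : DAState n where
  next := fun m => if m ∈ unmatched s then s.next m + 1 else s.next m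
  held := fun w => ((proposers P s w ∪ (s.held w).toFinset).toList).argmin (P.wrank w)

/-- the state after `k` rounds of men-proposing deferred acceptance -/
def stateAt (P : Profile n) (k : ℕ) : DAState n := (step P)^[k] (initState n)

/-- the final state of men-proposing deferred acceptance
(`n * n + 1` iterations is always enough to reach the fixed point) -/
def finalState (P : Profile n) : DAState n := stateAt P (n * n + 1)

/-- total number of proposals made during the men-proposing DA -/
def totalProposals (P : Profile n) : ℕ := ∑ m : Fin n, (finalState P).next m

/-- number of rounds of the men-proposing DA (rounds in which some proposal is made) -/
def rounds (P : Profile n) : ℕ :=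
  ((Finset.range (n * n + 1)).filter fun k => (unmatched (stateAt P k)).Nonempty).card

/-- total number of proposals received by woman `w` during the men-proposing DA -/
def proposalsTo (P : Profile n) (w : Fin n) : ℕ :=
  ∑ k ∈ Finset.range (n * n + 1), (proposers P (stateAt P k) w).card

/-- man `m` proposes to woman `w` at some point during the men-proposing DA -/
def proposedTo (P : Profile n) (m w : Fin n) : Prop :=
  ∃ k < n * n + 1, m ∈ proposers P (stateAt P k) w

/-- the men-proposing DA makes the maximum possible number `n² - n + 1` of proposals -/
def MaxProp (P : Profile n) : Prop := P.totalProposals = n * n + 1 - n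

/-- the men-proposing DA takes the maximum possible number `n² - 2n + 2` of rounds -/
def MaxRou (P : Profile n) : Prop := P.rounds = n * n + 2 - 2 * n

/-- a matching (a bijection man ↦ woman) is stable iff no man-woman pair mutually
prefer each other to their assigned partners -/
def Stable (P : Profile n) (μ : Fin n ≃ Fin n) : Prop :=
  ¬ ∃ (m w : Fin n), P.mPrefers m w (μ m) ∧ P.wPrefers w m (μ.symm w)

/-- the profile admits a unique stable matching -/
def USM (P : Profile n) : Prop := ∃! μ : Fin n ≃ Fin n, P.Stable μ

/-- the sequential preference condition of Eeckhout (2000) -/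
def SPC (P : Profile n) : Prop :=
  ∃ σ τ : Equiv.Perm (Fin n), ∀ i j : Fin n, i < j →
    P.mPrefers (σ i) (τ i) (τ j) ∧ P.wPrefers (τ i) (σ i) (σ j)

/-- the no crossing condition of Clark (2006) -/
def NCC (P : Profile n) : Prop :=
  ∃ σ τ : Equiv.Perm (Fin n), ∀ i j k l : Fin n, i < j → k < l →
    (P.mPrefers (σ i) (τ l) (τ k) → P.mPrefers (σ j) (τ l) (τ k)) ∧
    (P.wPrefers (τ k) (σ j) (σ i) → P.wPrefers (τ l) (σ j) (σ i))

end Profile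

/-!
Let `m` be a man who proposes in the last round in which anyone proposes, say to `w`. After that
round every man is held, and since a man is held by at most one woman, the `n` women hold `n`
distinct men; so every candidate of every woman in that round (a new proposer or the man she
held) ends up held by her. Hence `m` was `w`'s only candidate: no one else proposed to her then,
and she held no one before. A woman who has been proposed to holds someone from then on, so `w`
received no earlier proposal, and nobody proposes after the last round.

The algorithm stops within `n²` rounds because no man is rejected by all `n` women: every woman
who has been proposed to holds someone, and the held men are distinct.
-/

namespace Profile

variable {n : ℕ} {P : Profile n} {s : DAState n} {m w : Fin n}

def candidates (P : Profile n) (s : DAState n) (w : Fin n) : Finset (Fin n) :=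
  proposers P s w ∪ (s.held w).toFinset

lemma mrank_injective (P : Profile n) (m : Fin n) : Function.Injective (P.mrank m) :=
  fun _ _ h => (P.mpref m).symm.injective (Fin.val_injective h)

lemma mrank_lt (P : Profile n) (m w : Fin n) : P.mrank m w < n :=
  ((P.mpref m).symm w).isLt

lemma mem_unmatched : m ∈ unmatched s ↔ ∀ w, s.held w ≠ some m := by
  simp [unmatched]

lemma mem_proposers : m ∈ proposers P s w ↔ m ∈ unmatched s ∧ target P s m = w := by
  simp [proposers]

lemma mrank_target (h : s.next m < n) : P.mrank m (target P s m) = s.next m := by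
  simp [mrank, target, Nat.mod_eq_of_lt h]

lemma step_next (P : Profile n) (s : DAState n) (m : Fin n) :
    (step P s).next m = if m ∈ unmatched s then s.next m + 1 else s.next m := rfl

lemma mem_candidates_of_step_held (h : (step P s).held w = some m) : m ∈ candidates P s w :=
  Finset.mem_toList.mp (List.argmin_mem h)

lemma isSome_step_held_iff : ((step P s).held w).isSome ↔ (candidates P s w).Nonempty := by
  simp [step, candidates, Option.isSome_iff_ne_none, List.argmin_eq_none,
    Finset.nonempty_iff_ne_empty]

lemma isSome_step_held (h : (s.held w).isSome) : ((step P s).held w).isSome := by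
  obtain ⟨m, hm⟩ := Option.isSome_iff_exists.mp h
  exact isSome_step_held_iff.mpr ⟨m, by simp [candidates, hm]⟩

lemma step_eq_self (h : unmatched s = ∅) : step P s = s := by
  have hprop : ∀ w, proposers P s w = ∅ := fun w => by simp [proposers, h]
  obtain ⟨next, held⟩ := s
  simp only [step, h, Finset.notMem_empty, if_false, hprop, Finset.empty_union, DAState.mk.injEq,
    true_and]
  funext w
  cases held w <;> simp

lemma stateAt_succ (P : Profile n) (k : ℕ) : stateAt P (k + 1) = step P (stateAt P k) :=
  Function.iterate_succ_apply' _ _ _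

/-- `P.mrank m w < s.next m` says that `m` has already proposed to `w`. -/
structure Invariant (P : Profile n) (s : DAState n) : Prop where
  held_inj : ∀ {w w' m}, s.held w = some m → s.held w' = some m → w = w'
  next_le : ∀ m, s.next m ≤ n
  isSome_held : ∀ {m w}, P.mrank m w < s.next m → (s.held w).isSome

lemma invariant_initState (P : Profile n) : Invariant P (initState n) where
  held_inj h := by simp [initState] at h
  next_le _ := Nat.zero_le n
  isSome_held h := by simp [initState] at h

lemma Invariant.eq_of_mem_candidates (hI : Invariant P s) {w w' : Fin n}
    (h : m ∈ candidates P s w) (h' : m ∈ candidates P s w') : w = w' := by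
  simp only [candidates, Finset.mem_union, mem_proposers, Option.mem_toFinset,
    Option.mem_def] at h h'
  rcases h with ⟨hm, rfl⟩ | h <;> rcases h' with ⟨hm', rfl⟩ | h'
  · rfl
  · exact absurd h' (mem_unmatched.mp hm _)
  · exact absurd h (mem_unmatched.mp hm' _)
  · exact hI.held_inj h h'

lemma Invariant.exists_held_eq (hI : Invariant P s) (h : ∀ w, (s.held w).isSome) (m : Fin n) :
    ∃ w, s.held w = some m := by
  choose g hg using fun w => Option.isSome_iff_exists.mp (h w)
  have hg_inj : Function.Injective g := fun w w' hw => hI.held_inj (hg w) (hw ▸ hg w')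
  obtain ⟨w, rfl⟩ := Finite.surjective_of_injective hg_inj m
  exact ⟨w, hg w⟩

lemma Invariant.next_lt (hI : Invariant P s) (hm : m ∈ unmatched s) : s.next m < n := by
  by_contra! h
  obtain ⟨w, hw⟩ := hI.exists_held_eq
    (fun w => hI.isSome_held ((mrank_lt P m w).trans_le h)) m
  exact mem_unmatched.mp hm w hw

lemma invariant_step (hI : Invariant P s) : Invariant P (step P s) where
  held_inj h h' :=
    hI.eq_of_mem_candidates (mem_candidates_of_step_held h) (mem_candidates_of_step_held h')
  next_le m := by
    rw [step_next]
    split_ifs with hm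
    exacts [hI.next_lt hm, hI.next_le m]
  isSome_held {m w} h := by
    by_cases hproposed : P.mrank m w < s.next m
    · exact isSome_step_held (hI.isSome_held hproposed)
    have hm : m ∈ unmatched s := by
      by_contra hm
      simp only [step_next, hm, if_false] at h
      exact hproposed h
    have hw : w = target P s m := by
      apply mrank_injective P m
      simp only [step_next, hm, if_true] at h
      rw [mrank_target (hI.next_lt hm)]
      omega
    exact isSome_step_held_iff.mpr ⟨m, by simp [candidates, mem_proposers, hm, hw]⟩

lemma invariant_stateAt (P : Profile n) (k : ℕ) : Invariant P (stateAt P k) := by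
  induction k with
  | zero => exact invariant_initState P
  | succ k ih => rw [stateAt_succ]; exact invariant_step ih

lemma Invariant.sum_next_le (hI : Invariant P s) : ∑ m, s.next m ≤ n * n := by
  simpa using Finset.sum_le_sum (s := Finset.univ) fun m _ => hI.next_le m

lemma sum_next_lt_sum_step_next (h : (unmatched s).Nonempty) :
    ∑ m, s.next m < ∑ m, (step P s).next m := by
  obtain ⟨m, hm⟩ := h
  refine Finset.sum_lt_sum (fun m' _ => ?_) ⟨m, Finset.mem_univ m, by simp [step_next, hm]⟩
  rw [step_next]
  split_ifs <;> omega

lemma exists_unmatched_stateAt_eq_empty (P : Profile n) :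
    ∃ k ≤ n * n, unmatched (stateAt P k) = ∅ := by
  by_contra! h
  have hgrow : ∀ k ≤ n * n + 1, k ≤ ∑ m, (stateAt P k).next m := by
    intro k hk
    induction k with
    | zero => exact Nat.zero_le _
    | succ k ih =>
      have := sum_next_lt_sum_step_next (P := P) (h k (by omega))
      rw [← stateAt_succ] at this
      have := ih (by omega)
      omega
  have := hgrow _ le_rfl
  have := (invariant_stateAt P (n * n + 1)).sum_next_le
  omega

lemma stateAt_eq_of_unmatched_eq_empty {K k : ℕ} (h : unmatched (stateAt P K) = ∅)
    (hk : K ≤ k) :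
    stateAt P k = stateAt P K := by
  induction k, hk using Nat.le_induction with
  | base => rfl
  | succ k _ ih => rw [stateAt_succ, ih, step_eq_self h]

lemma exists_last_round (P : Profile n) (hn : 0 < n) :
    ∃ r < n * n, (unmatched (stateAt P r)).Nonempty ∧ unmatched (stateAt P (r + 1)) = ∅ := by
  obtain ⟨K, hK, hKempty⟩ := exists_unmatched_stateAt_eq_empty P
  have h0 : unmatched (stateAt P 0) ≠ ∅ := by
    simpa [stateAt, initState, unmatched] using
      (Finset.univ_nonempty_iff.mpr ⟨⟨0, hn⟩⟩).ne_empty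
  obtain ⟨r, hr, hr1⟩ := Nat.exists_not_and_succ_of_not_zero_of_exists
    (p := fun k => unmatched (stateAt P k) = ∅) h0 ⟨K, hKempty⟩
  refine ⟨r, ?_, Finset.nonempty_iff_ne_empty.mpr hr, hr1⟩
  by_contra! hle
  exact hr (stateAt_eq_of_unmatched_eq_empty hKempty (hK.trans hle) ▸ hKempty)

lemma isSome_held_stateAt_of_le {k k' : ℕ} (hk : k ≤ k') (h : ((stateAt P k).held w).isSome) :
    ((stateAt P k').held w).isSome := by
  induction k', hk using Nat.le_induction with
  | base => exact h
  | succ k' _ ih => rw [stateAt_succ]; exact isSome_step_held ih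

lemma proposers_stateAt_eq_empty_of_held_eq_none {k r : ℕ} (hr : (stateAt P r).held w = none)
    (hk : k < r) : proposers P (stateAt P k) w = ∅ := by
  by_contra h
  have hsome : ((stateAt P (k + 1)).held w).isSome := by
    rw [stateAt_succ, isSome_step_held_iff]
    exact (Finset.nonempty_iff_ne_empty.mpr h).mono Finset.subset_union_left
  simpa [hr] using isSome_held_stateAt_of_le hk hsome

lemma proposers_stateAt_eq_empty_of_le {K k : ℕ} (h : unmatched (stateAt P K) = ∅)
    (hk : K ≤ k) :
    proposers P (stateAt P k) w = ∅ := by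
  simp [stateAt_eq_of_unmatched_eq_empty h hk, proposers, h]

lemma Invariant.proposers_target_eq_singleton (hI : Invariant P s) (hm : m ∈ unmatched s)
    (hfin : unmatched (step P s) = ∅) :
    proposers P s (target P s m) = {m} ∧ s.held (target P s m) = none := by
  set w := target P s m
  have hmw : m ∈ proposers P s w := mem_proposers.mpr ⟨hm, rfl⟩
  have held_eq : ∀ y ∈ candidates P s w, (step P s).held w = some y := by
    intro y hy
    obtain ⟨w', hw'⟩ : ∃ w', (step P s).held w' = some y := by
      by_contra! h
      simpa [hfin] using mem_unmatched.mpr h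
    rwa [hI.eq_of_mem_candidates hy (mem_candidates_of_step_held hw')]
  have eq_m : ∀ y ∈ candidates P s w, y = m := fun y hy => Option.some_injective _
    ((held_eq y hy).symm.trans (held_eq m (Finset.mem_union_left _ hmw)))
  refine ⟨Finset.eq_singleton_iff_unique_mem.mpr
    ⟨hmw, fun y hy => eq_m y (Finset.mem_union_left _ hy)⟩, ?_⟩
  cases hw : s.held w with
  | none => rfl
  | some y =>
    obtain rfl := eq_m y (Finset.mem_union_right _ (by simp [hw]))
    exact absurd hw (mem_unmatched.mp hm w)

end Profile

/-- In any execution of the men-proposing DA on a profile with `n` men and `n`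
women, some woman receives exactly one proposal in total. -/
theorem da_exists_woman_single_proposal (n : ℕ) (hn : 0 < n) (P : Profile n) :
    ∃ w : Fin n, P.proposalsTo w = 1 := by
  obtain ⟨r, hr, ⟨m, hm⟩, hfin⟩ := P.exists_last_round hn
  obtain ⟨hprop, hheld⟩ := (Profile.invariant_stateAt P r).proposers_target_eq_singleton hm
    (Profile.stateAt_succ P r ▸ hfin)
  refine ⟨Profile.target P (P.stateAt r) m, ?_⟩
  rw [Profile.proposalsTo, Finset.sum_eq_single_of_mem r (Finset.mem_range.mpr (by omega)), hprop,
    Finset.card_singleton]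
  intro k _ hkr
  rcases hkr.lt_or_gt with hk | hk
  · rw [Profile.proposers_stateAt_eq_empty_of_held_eq_none hheld hk, Finset.card_empty]
  · rw [Profile.proposers_stateAt_eq_empty_of_le hfin hk, Finset.card_empty]
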